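/- The function D(p) = W·log₂(1+pγ) − (W·ς/((p + 1/γ)·ln 2))·(p/ς + p_c) − c is strictly increasing in p on [0, ∞), satisfies D(0) = −W·ς·γ·p_c/ln2 − c < 0 when c ≥ 0, and tends to +∞ as p → ∞; hence it has a unique zero in (0, ∞). -/

import Mathlib

/-!
After scaling by `ln 2 / W` and cancelling `ς`, `D + c` becomes
`log (1 + pγ) - (p + ς p_c) / (p + 1/γ)`, whose derivative `(p + ς p_c) / (p + 1/γ)²` is
positive for `p > 0`. The rational term stays below `1 + ς p_c γ`, so the logarithm drives `D`
to `+∞`, and the intermediate value theorem together with monotonicity gives the unique zero.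
-/

noncomputable def Dfun (W γ ς pc c p : ℝ) : ℝ :=
  W * Real.logb 2 (1 + p * γ) - (W * ς / ((p + 1 / γ) * Real.log 2)) * (p / ς + pc) - c

open Set Filter

theorem StrictMonoOn.existsUnique_pos_eq_zero {f : ℝ → ℝ} (hcont : ContinuousOn f (Ici 0))
    (hmono : StrictMonoOn f (Ici 0)) (h0 : f 0 < 0) (htop : Tendsto f atTop atTop) :
    ∃! p : ℝ, 0 < p ∧ f p = 0 := by
  obtain ⟨b, hfb, hb⟩ := ((htop.eventually_gt_atTop 0).and (eventually_ge_atTop 0)).exists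
  obtain ⟨p, hp, hfp⟩ :=
    intermediate_value_Ioo hb (hcont.mono Icc_subset_Ici_self) ⟨h0, hfb⟩
  refine ⟨p, ⟨hp.1, hfp⟩, fun q ⟨hq, hfq⟩ => ?_⟩
  exact hmono.injOn (mem_Ici.2 hq.le) (mem_Ici.2 hp.1.le) (hfq.trans hfp.symm)

namespace Dfun

noncomputable def normalized (γ a p : ℝ) : ℝ :=
  Real.log (1 + p * γ) - (p + a) / (p + 1 / γ)

variable {γ a : ℝ}

theorem hasDerivAt_normalized (hγ : 0 < γ) {p : ℝ} (hp : 0 ≤ p) :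
    HasDerivAt (normalized γ a) ((p + a) / (p + 1 / γ) ^ 2) p := by
  have hd : 0 < p + 1 / γ := by positivity
  have hn : 0 < 1 + p * γ := by positivity
  have hlin : HasDerivAt (fun p : ℝ => 1 + p * γ) γ p := by
    simpa using ((hasDerivAt_id' p).mul_const γ).const_add 1
  have hquot := ((hasDerivAt_id' p).add_const a).div ((hasDerivAt_id' p).add_const (1 / γ)) hd.ne'
  refine ((hlin.log hn.ne').sub hquot).congr_deriv ?_
  -- `γ / (1 + pγ) = 1 / (p + 1/γ)`, so everything is over `(p + 1/γ)²`
  field_simp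
  ring

theorem continuousOn_normalized (hγ : 0 < γ) : ContinuousOn (normalized γ a) (Ici 0) :=
  fun _ hp => (hasDerivAt_normalized hγ hp).continuousAt.continuousWithinAt

theorem strictMonoOn_normalized (hγ : 0 < γ) (ha : 0 ≤ a) :
    StrictMonoOn (normalized γ a) (Ici 0) := by
  refine strictMonoOn_of_deriv_pos (convex_Ici 0) (continuousOn_normalized hγ) fun p hp => ?_
  rw [interior_Ici, mem_Ioi] at hp
  rw [(hasDerivAt_normalized hγ hp.le).deriv]
  positivity

theorem add_div_add_one_div_le (hγ : 0 < γ) (ha : 0 ≤ a) {p : ℝ} (hp : 0 ≤ p) :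
    (p + a) / (p + 1 / γ) ≤ 1 + a * γ := by
  rw [div_le_iff₀ (by positivity)]
  have : (1 + a * γ) * (p + 1 / γ) = p + a + a * γ * p + 1 / γ := by
    field_simp
    ring
  rw [this]
  have : 0 ≤ a * γ * p := by positivity
  have : 0 < 1 / γ := by positivity
  linarith

theorem tendsto_normalized_atTop (hγ : 0 < γ) (ha : 0 ≤ a) :
    Tendsto (normalized γ a) atTop atTop := by
  have hlog : Tendsto (fun p : ℝ => Real.log (1 + p * γ) - (1 + a * γ)) atTop atTop :=
    tendsto_atTop_add_const_right _ _ <| Real.tendsto_log_atTop.comp <|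
      tendsto_atTop_add_const_left _ _ (tendsto_id.atTop_mul_const hγ)
  refine tendsto_atTop_mono' _ ?_ hlog
  filter_upwards [eventually_ge_atTop 0] with p hp
  have := add_div_add_one_div_le hγ ha hp
  unfold normalized
  linarith

theorem eq_normalized (W pc c : ℝ) {ς : ℝ} (hς : ς ≠ 0) (p : ℝ) :
    Dfun W γ ς pc c p = W / Real.log 2 * normalized γ (ς * pc) p - c := by
  have : ς * (p / ς + pc) = p + ς * pc := by field_simp
  simp only [Dfun, normalized, Real.logb]
  rw [← this]
  generalize p + 1 / γ = d
  ring

end Dfun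

open Dfun in
theorem Dfun_props_general (W γ ς pc c : ℝ) (hW : 0 < W) (hγ : 0 < γ)
    (hς : 0 < ς) (hpc : 0 < pc) (hc : 0 ≤ c) :
    StrictMonoOn (Dfun W γ ς pc c) (Set.Ici 0) ∧
    Dfun W γ ς pc c 0 = -(W * ς * γ * pc / Real.log 2) - c ∧
    Dfun W γ ς pc c 0 < 0 ∧
    Filter.Tendsto (Dfun W γ ς pc c) Filter.atTop Filter.atTop ∧
    (∃! p : ℝ, 0 < p ∧ Dfun W γ ς pc c p = 0) := by
  have hscale : 0 < W / Real.log 2 := div_pos hW (Real.log_pos one_lt_two)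
  have ha : 0 ≤ ς * pc := by positivity
  have hD : Dfun W γ ς pc c = fun p => W / Real.log 2 * normalized γ (ς * pc) p - c :=
    funext (eq_normalized W pc c hς.ne')
  have hmono : StrictMonoOn (Dfun W γ ς pc c) (Ici 0) := fun x hx y hy hxy => by
    rw [hD]
    exact sub_lt_sub_right (mul_lt_mul_of_pos_left (strictMonoOn_normalized hγ ha hx hy hxy)
      hscale) c
  have hzero : Dfun W γ ς pc c 0 = -(W * ς * γ * pc / Real.log 2) - c := by
    rw [hD]
    simp only [normalized, zero_mul, add_zero, Real.log_one]
    field_simp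
    ring
  have hneg : Dfun W γ ς pc c 0 < 0 := by
    rw [hzero]
    have : 0 < W * ς * γ * pc / Real.log 2 := by positivity
    linarith
  have htop : Tendsto (Dfun W γ ς pc c) atTop atTop := by
    rw [hD]
    exact tendsto_atTop_add_const_right _ _
      ((tendsto_normalized_atTop hγ ha).const_mul_atTop hscale)
  have hcont : ContinuousOn (Dfun W γ ς pc c) (Ici 0) := by
    rw [hD]
    exact (continuousOn_const.mul (continuousOn_normalized hγ)).sub continuousOn_const
  exact ⟨hmono, hzero, hneg, htop, hmono.existsUnique_pos_eq_zero hcont hneg htop⟩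

/-- `D` is strictly increasing on `[0, ∞)`, negative at `0`, tends to `+∞`,
and hence has a unique zero in `(0, ∞)`. -/
theorem Dfun_props (W γ ς pc c : ℝ) (hW : 0 < W) (hγ : 0 < γ)
    (hς : 0 < ς) (hς1 : ς ≤ 1) (hpc : 0 < pc) (hc : 0 ≤ c) :
    StrictMonoOn (Dfun W γ ς pc c) (Set.Ici 0) ∧
    Dfun W γ ς pc c 0 = -(W * ς * γ * pc / Real.log 2) - c ∧
    Dfun W γ ς pc c 0 < 0 ∧
    Filter.Tendsto (Dfun W γ ς pc c) Filter.atTop Filter.atTop ∧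
    (∃! p : ℝ, 0 < p ∧ Dfun W γ ς pc c p = 0) :=
  Dfun_props_general W γ ς pc c hW hγ hς hpc hc
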